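/- arXiv:1803.00718 — 6 statements merged into one kernel-verified Lean document; each statement's English description precedes it below -/
import Mathlib

section
/- Let κ > 1 and define the sequence λ_{k+1} = (1 - λ_k²/κ + √((1 - λ_k²/κ)² + 4λ_k²))/2 with λ_1 ∈ (1, √κ]. Then λ_k ≤ √κ for all k ≥ 1. -/
/-!
The recursion sends `λ_k = x` to the positive root `t` of `t² - (1 - x²/κ) t - x² = 0`.
At `t = √κ` this quadratic equals `(κ - x²)(1 - 1/√κ)`, which is nonnegative when `x² ≤ κ` and
`κ ≥ 1`; since `√κ` also lies to the right of the vertex, the positive root is at most `√κ`.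
Hence the step maps `[0, √κ]` into itself, and the bound follows by induction.
-/

open Real Set

lemma add_sqrt_sq_add_div_two_le {a b t : ℝ} (hat : a ≤ 2 * t) (hb : b ≤ t ^ 2 - a * t) :
    (a + √(a ^ 2 + 4 * b)) / 2 ≤ t := by
  have : √(a ^ 2 + 4 * b) ≤ 2 * t - a := (sqrt_le_left (by linarith)).2 (by nlinarith)
  linarith

lemma add_sqrt_sq_add_div_two_nonneg (a : ℝ) {b : ℝ} (hb : 0 ≤ b) :
    0 ≤ (a + √(a ^ 2 + 4 * b)) / 2 := by
  have : |a| ≤ √(a ^ 2 + 4 * b) := abs_le_sqrt (by linarith)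
  linarith [neg_abs_le a]

noncomputable def lambdaStep (κ x : ℝ) : ℝ :=
  (1 - x ^ 2 / κ + √((1 - x ^ 2 / κ) ^ 2 + 4 * x ^ 2)) / 2

lemma mapsTo_lambdaStep_Icc {κ : ℝ} (hκ : 1 ≤ κ) :
    MapsTo (lambdaStep κ) (Icc 0 √κ) (Icc 0 √κ) := by
  rintro x ⟨hx0, hxs⟩
  set s := √κ
  have hs : 1 ≤ s := one_le_sqrt.2 hκ
  have hκs : κ = s ^ 2 := (sq_sqrt (by linarith)).symm
  have hx2 : x ^ 2 ≤ s ^ 2 := pow_le_pow_left₀ hx0 hxs 2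
  have hquad : s ^ 2 - (1 - x ^ 2 / κ) * s - x ^ 2 = (s ^ 2 - x ^ 2) * (s - 1) / s := by
    rw [hκs]
    field_simp
    ring
  refine ⟨add_sqrt_sq_add_div_two_nonneg _ (by positivity), add_sqrt_sq_add_div_two_le ?_ ?_⟩
  · have : 0 ≤ x ^ 2 / κ := by positivity
    linarith
  · have : 0 ≤ (s ^ 2 - x ^ 2) * (s - 1) / s :=
      div_nonneg (mul_nonneg (by linarith) (by linarith)) (by linarith)
    linarith

theorem lambda_le_sqrt_kappa (κ : ℝ) (hκ : 1 < κ) (lam : ℕ → ℝ)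
    (hinit : 1 < lam 1 ∧ lam 1 ≤ Real.sqrt κ)
    (hrec : ∀ k ≥ 1, lam (k + 1) =
      (1 - (lam k) ^ 2 / κ + Real.sqrt ((1 - (lam k) ^ 2 / κ) ^ 2 + 4 * (lam k) ^ 2)) / 2) :
    ∀ k ≥ 1, lam k ≤ Real.sqrt κ := by
  suffices h : ∀ k ≥ 1, lam k ∈ Icc 0 √κ from fun k hk ↦ (h k hk).2
  intro k hk
  induction k, hk using Nat.le_induction with
  | base => exact ⟨by linarith [hinit.1], hinit.2⟩
  | succ n hn ih =>
    rw [hrec n hn]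
    exact mapsTo_lambdaStep_Icc hκ.le ih
end

section
/- Let κ > 1 and define λ_{k+1} = (1 - λ_k²/κ + √((1 - λ_k²/κ)² + 4λ_k²))/2 with λ_1 ∈ (1, √κ]. Then {λ_k} is monotonically nondecreasing. -/
/-!
Write `a = 1 - l²/κ`, so that the next term is `(a + √(a² + 4l²)) / 2`. Squaring shows that
it is at least `l` once `l * a ≥ 0`, i.e. once `0 ≤ l` and `l² ≤ κ`, and at most `√κ` when moreover
`κ ≥ 1`, because then `√κ (κ - √κ a - l²) = (√κ - 1)(κ - l²) ≥ 0`. Hence `[0, √κ]` is invariant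
under the recursion and the sequence increases inside it.
-/

open Real Set

noncomputable def lambdaNext (κ l : ℝ) : ℝ :=
  (1 - l ^ 2 / κ + √((1 - l ^ 2 / κ) ^ 2 + 4 * l ^ 2)) / 2

variable {κ l : ℝ}

lemma le_lambdaNext (hl0 : 0 ≤ l) (hl : l ^ 2 ≤ κ) : l ≤ lambdaNext κ l := by
  set a := 1 - l ^ 2 / κ
  have ha : 0 ≤ a := sub_nonneg.2 (div_le_one_of_le₀ hl ((sq_nonneg l).trans hl))
  have hsq : (2 * l - a) ^ 2 ≤ a ^ 2 + 4 * l ^ 2 := by nlinarith [mul_nonneg hl0 ha]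
  have := (le_abs_self _).trans (abs_le_sqrt hsq)
  rw [lambdaNext]
  linarith

lemma lambdaNext_le_sqrt (hκ : 1 ≤ κ) (hl : l ^ 2 ≤ κ) : lambdaNext κ l ≤ √κ := by
  set s := √κ
  have hs : s ^ 2 = κ := sq_sqrt (by linarith)
  have hs1 : 1 ≤ s := one_le_sqrt.2 hκ
  set a := 1 - l ^ 2 / κ
  have has : a * s ^ 2 = s ^ 2 - l ^ 2 := by
    rw [hs, sub_mul, div_mul_cancel₀ _ (by linarith : κ ≠ 0), one_mul]
  have ha1 : a ≤ 1 := sub_le_self _ (div_nonneg (sq_nonneg l) (by linarith))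
  have key : a ^ 2 + 4 * l ^ 2 ≤ (2 * s - a) ^ 2 := by
    have : 0 ≤ s * (s ^ 2 - s * a - l ^ 2) := by
      nlinarith [mul_nonneg (sub_nonneg.2 hs1) (sub_nonneg.2 (hs ▸ hl))]
    nlinarith [(mul_nonneg_iff_of_pos_left (by linarith : 0 < s)).1 this]
  have := sqrt_le_iff.2 ⟨by linarith, key⟩
  rw [lambdaNext]
  linarith

lemma mapsTo_lambdaNext (hκ : 1 ≤ κ) : MapsTo (lambdaNext κ) (Icc 0 √κ) (Icc 0 √κ) := by
  rintro l ⟨hl0, hl⟩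
  have hl2 : l ^ 2 ≤ κ := (le_sqrt hl0 (by linarith)).1 hl
  exact ⟨hl0.trans (le_lambdaNext hl0 hl2), lambdaNext_le_sqrt hκ hl2⟩

theorem lambda_monotone (κ : ℝ) (hκ : 1 < κ) (lam : ℕ → ℝ)
    (hinit : 1 < lam 1 ∧ lam 1 ≤ Real.sqrt κ)
    (hrec : ∀ k ≥ 1, lam (k + 1) =
      (1 - (lam k) ^ 2 / κ + Real.sqrt ((1 - (lam k) ^ 2 / κ) ^ 2 + 4 * (lam k) ^ 2)) / 2) :
    ∀ k ≥ 1, lam k ≤ lam (k + 1) := by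
  have hmem : ∀ k ≥ 1, lam k ∈ Icc 0 √κ := by
    intro k hk
    induction k, hk using Nat.le_induction with
    | base => exact ⟨zero_le_one.trans hinit.1.le, hinit.2⟩
    | succ k hk ih => rw [hrec k hk]; exact mapsTo_lambdaNext hκ.le ih
  intro k hk
  obtain ⟨hl0, hl⟩ := hmem k hk
  rw [hrec k hk]
  exact le_lambdaNext hl0 ((le_sqrt hl0 (by linarith)).1 hl)
end

section
/- Let κ > 1 and define λ_{k+1} = (1 - λ_k²/κ + √((1 - λ_k²/κ)² + 4λ_k²))/2 with λ_1 ∈ (1, √κ]. Then λ_k converges to √κ as k → ∞. -/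
/-!
`λ_{k+1}` is the positive root `y` of `y ^ 2 = (1 - λ_k ^ 2 / κ) y + λ_k ^ 2`. On `[λ_1, √κ]` this
step map satisfies `x ≤ f x ≤ √κ`, so the orbit increases to a limit, which by continuity is a
fixed point; a positive fixed point forces `1 - x ^ 2 / κ = 0`, i.e. `x = √κ`.
-/

open Filter Set Topology Function

theorem tendsto_iterate_Icc_of_le_map {α : Type*} [ConditionallyCompleteLinearOrder α]
    [TopologicalSpace α] [OrderTopology α] {f : α → α} {a b x : α} (hf : Continuous f)
    (hmaps : MapsTo f (Icc a b) (Icc a b)) (hle : ∀ y ∈ Icc a b, y ≤ f y)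
    (hfix : ∀ y ∈ Icc a b, IsFixedPt f y → y = b) (hx : x ∈ Icc a b) :
    Tendsto (fun n ↦ f^[n] x) atTop (𝓝 b) := by
  have horbit : ∀ n, f^[n] x ∈ Icc a b := fun n ↦ hmaps.iterate n hx
  have hmono : Monotone fun n ↦ f^[n] x := monotone_nat_of_le_succ fun n ↦ by
    rw [iterate_succ_apply']
    exact hle _ (horbit n)
  have hlim := tendsto_atTop_ciSup hmono ⟨b, forall_mem_range.2 fun n ↦ (horbit n).2⟩
  have hmem : ⨆ n, f^[n] x ∈ Icc a b :=
    isClosed_Icc.mem_of_tendsto hlim (Eventually.of_forall horbit)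
  rwa [← hfix _ hmem (isFixedPt_of_tendsto_iterate hlim hf.continuousAt)]

noncomputable def lamStep (κ x : ℝ) : ℝ :=
  (1 - x ^ 2 / κ + √((1 - x ^ 2 / κ) ^ 2 + 4 * x ^ 2)) / 2

theorem continuous_lamStep (κ : ℝ) : Continuous (lamStep κ) := by
  unfold lamStep
  fun_prop

theorem lamStep_sq (κ x : ℝ) :
    lamStep κ x ^ 2 = (1 - x ^ 2 / κ) * lamStep κ x + x ^ 2 := by
  have hr := Real.sq_sqrt (by positivity : 0 ≤ (1 - x ^ 2 / κ) ^ 2 + 4 * x ^ 2)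
  unfold lamStep
  linear_combination hr / 4

theorem le_lamStep {κ x : ℝ} (hx : 0 ≤ x) (hxκ : x ^ 2 ≤ κ) : x ≤ lamStep κ x := by
  have hd : 0 ≤ 1 - x ^ 2 / κ :=
    sub_nonneg.2 (div_le_one_of_le₀ hxκ ((sq_nonneg x).trans hxκ))
  have : 2 * x - (1 - x ^ 2 / κ) ≤ √((1 - x ^ 2 / κ) ^ 2 + 4 * x ^ 2) :=
    (le_abs_self _).trans (Real.abs_le_sqrt (by nlinarith))
  unfold lamStep
  linarith

theorem lamStep_le_sqrt {κ x : ℝ} (hκ : 1 ≤ κ) (hxκ : x ^ 2 ≤ κ) : lamStep κ x ≤ √κ := by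
  obtain ⟨s, hs1, rfl⟩ : ∃ s, 1 ≤ s ∧ κ = s ^ 2 :=
    ⟨√κ, Real.one_le_sqrt.2 hκ, (Real.sq_sqrt (by linarith)).symm⟩
  rw [Real.sqrt_sq (by linarith)]
  have hd : 1 - x ^ 2 / s ^ 2 ≤ 1 := by
    have : 0 ≤ x ^ 2 / s ^ 2 := by positivity
    linarith
  -- with `d = 1 - x ^ 2 / s ^ 2`: `(2 s - d) ^ 2 - (d ^ 2 + 4 x ^ 2) = 4 (s ^ 2 - s d - x ^ 2)`
  have hkey : x ^ 2 + s * (1 - x ^ 2 / s ^ 2) ≤ s ^ 2 := by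
    have : s * (1 - x ^ 2 / s ^ 2) = (s ^ 2 - x ^ 2) / s := by field_simp
    linarith [div_le_self (sub_nonneg.2 hxκ) hs1]
  have : √((1 - x ^ 2 / s ^ 2) ^ 2 + 4 * x ^ 2) ≤ 2 * s - (1 - x ^ 2 / s ^ 2) :=
    Real.sqrt_le_iff.2 ⟨by linarith, by nlinarith⟩
  unfold lamStep
  linarith

theorem eq_sqrt_of_isFixedPt_lamStep {κ x : ℝ} (hx : 0 < x) (h : IsFixedPt (lamStep κ) x) :
    x = √κ := by
  have hd : (1 - x ^ 2 / κ) * x = 0 := by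
    have := lamStep_sq κ x
    rw [h] at this
    linarith
  have hxκ : x ^ 2 / κ = 1 := by
    have := (mul_eq_zero.1 hd).resolve_right hx.ne'
    linarith
  have hκ : κ ≠ 0 := by
    rintro rfl
    simp at hxκ
  rw [div_eq_one_iff_eq hκ] at hxκ
  rw [← hxκ, Real.sqrt_sq hx.le]

theorem lambda_tendsto_sqrt_kappa (κ : ℝ) (hκ : 1 < κ) (lam : ℕ → ℝ)
    (hinit : 1 < lam 1 ∧ lam 1 ≤ Real.sqrt κ)
    (hrec : ∀ k ≥ 1, lam (k + 1) =
      (1 - (lam k) ^ 2 / κ + Real.sqrt ((1 - (lam k) ^ 2 / κ) ^ 2 + 4 * (lam k) ^ 2)) / 2) :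
    Filter.Tendsto lam Filter.atTop (nhds (Real.sqrt κ)) := by
  obtain ⟨hlam1, hlam1κ⟩ := hinit
  have hpos : ∀ y ∈ Icc (lam 1) √κ, 0 < y := fun y hy ↦ by linarith [hy.1]
  have hstep : ∀ y ∈ Icc (lam 1) √κ, y ≤ lamStep κ y ∧ lamStep κ y ≤ √κ := fun y hy ↦
    have hyκ := (Real.le_sqrt' (hpos y hy)).1 hy.2
    ⟨le_lamStep (hpos y hy).le hyκ, lamStep_le_sqrt hκ.le hyκ⟩
  have horbit : ∀ n, lam (n + 1) = (lamStep κ)^[n] (lam 1) := by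
    intro n
    induction n with
    | zero => rfl
    | succ n ih => rw [iterate_succ_apply', ← ih, hrec (n + 1) (by omega), lamStep]
  refine (tendsto_add_atTop_iff_nat 1).1 (Tendsto.congr (fun n ↦ (horbit n).symm) ?_)
  exact tendsto_iterate_Icc_of_le_map (continuous_lamStep κ)
    (fun y hy ↦ ⟨hy.1.trans (hstep y hy).1, (hstep y hy).2⟩) (fun y hy ↦ (hstep y hy).1)
    (fun y hy ↦ eq_sqrt_of_isFixedPt_lamStep (hpos y hy)) ⟨le_rfl, hlam1κ⟩
end

section
/- Let f: R^n → R be proper, closed, convex and μ-strongly convex, and let f_η(x) = min_u { f(u) + (1/(2η))‖u - x‖² } be its Moreau envelope with parameter η > 0. Then f_η is μ/(ημ + 1)-strongly convex. -/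
/-!
Write `Φ u x = f u + ‖u - x‖² / (2η)`, so that `f_η x = ⨅ u, Φ u x`. Along a convex combination of
pairs `(u, x)` and `(v, y)`, the term `f` loses `μ/2 ‖u - v‖²` and the quadratic term loses
`1/(2η) ‖(u - x) - (v - y)‖²`. Since `α ‖p‖² + β ‖q‖² ≥ αβ/(α+β) ‖p - q‖²`, the total loss is at
least `μ/(ημ+1)/2 ‖x - y‖²`, i.e. `Φ` is jointly strongly convex with modulus `μ/(ημ+1)` in `x`,
and taking the infimum over `u` preserves this. Strong convexity with `μ > 0` makes `f` bounded
below, so the infima are finite.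
-/

open Set

section Convex

variable {E : Type*} [NormedAddCommGroup E] [NormedSpace ℝ E]

lemma uniformConvexOn_univ_iInf {U : Type*} [AddCommGroup U] [Module ℝ U]
    {φ : ℝ → ℝ} {Φ : U → E → ℝ} (hbdd : ∀ x, BddBelow (range fun u => Φ u x))
    (hΦ : ∀ u v x y (a b : ℝ), 0 ≤ a → 0 ≤ b → a + b = 1 →
      Φ (a • u + b • v) (a • x + b • y) ≤ a * Φ u x + b * Φ v y - a * b * φ ‖x - y‖) :
    UniformConvexOn univ φ fun x => ⨅ u, Φ u x := by
  refine ⟨convex_univ, fun x _ y _ a b ha hb hab => ?_⟩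
  simp only [smul_eq_mul, Real.mul_iInf_of_nonneg ha, Real.mul_iInf_of_nonneg hb]
  set m := (⨅ w, Φ w (a • x + b • y)) + a * b * φ ‖x - y‖
  have hm (u v : U) : m ≤ a * Φ u x + b * Φ v y := by
    linarith [(ciInf_le (hbdd _) (a • u + b • v)).trans (hΦ u v x y a b ha hb hab)]
  have hx (v : U) : m - b * Φ v y ≤ ⨅ u, a * Φ u x := le_ciInf fun u => by linarith [hm u v]
  have hy : m - ⨅ u, a * Φ u x ≤ ⨅ v, b * Φ v y := le_ciInf fun v => by linarith [hx v]
  linarith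

lemma ConvexOn.exists_sub_mul_norm_le [FiniteDimensional ℝ E] {g : E → ℝ}
    (hg : ConvexOn ℝ univ g) : ∃ c M : ℝ, ∀ u, c - M * ‖u‖ ≤ g u := by
  obtain ⟨C, hC⟩ : BddBelow (g '' Metric.closedBall 0 1) :=
    (isCompact_closedBall 0 1).bddBelow_image ((hg.continuousOn isOpen_univ).mono (subset_univ _))
  have hC_ball : ∀ v, ‖v‖ ≤ 1 → C ≤ g v := fun v hv => hC ⟨v, by simpa using hv, rfl⟩
  refine ⟨C, |C - g 0|, fun u => ?_⟩
  rcases le_or_gt ‖u‖ 1 with hu | hu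
  · nlinarith [hC_ball u hu, abs_nonneg (C - g 0), norm_nonneg u]
  set r := ‖u‖
  have hr : 0 < r := one_pos.trans hu
  -- The bound on the unit ball propagates linearly along the ray from `0` through `u`.
  have hseg : g (r⁻¹ • u) ≤ (1 - r⁻¹) * g 0 + r⁻¹ * g u := by
    simpa using hg.2 (mem_univ 0) (mem_univ u) (sub_nonneg.2 (inv_le_one_of_one_le₀ hu.le))
      (inv_nonneg.2 hr.le) (sub_add_cancel 1 r⁻¹)
  have hunit : C ≤ g (r⁻¹ • u) :=
    hC_ball _ (by rw [norm_smul, Real.norm_eq_abs, abs_inv, abs_of_pos hr, inv_mul_cancel₀ hr.ne'])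
  have hscaled : r * C ≤ (r - 1) * g 0 + g u := by
    have := mul_le_mul_of_nonneg_left (hunit.trans hseg) hr.le
    rwa [mul_add, ← mul_assoc, ← mul_assoc, mul_sub, mul_one, mul_inv_cancel₀ hr.ne', one_mul]
      at this
  nlinarith [mul_le_mul_of_nonneg_left (neg_abs_le (C - g 0)) (sub_nonneg.2 hu.le),
    abs_nonneg (C - g 0)]

end Convex

section InnerProductSpace

variable {E : Type*} [NormedAddCommGroup E] [InnerProductSpace ℝ E]

lemma mul_div_add_mul_norm_sub_sq_le {α β : ℝ} (hαβ : 0 < α + β) (x y : E) :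
    α * β / (α + β) * ‖x - y‖ ^ 2 ≤ α * ‖x‖ ^ 2 + β * ‖y‖ ^ 2 := by
  have key : (α + β) * (α * ‖x‖ ^ 2 + β * ‖y‖ ^ 2) - α * β * ‖x - y‖ ^ 2 = ‖α • x + β • y‖ ^ 2 := by
    rw [norm_add_sq_real, norm_sub_sq_real, norm_smul, norm_smul, real_inner_smul_left,
      real_inner_smul_right, mul_pow, mul_pow, Real.norm_eq_abs, Real.norm_eq_abs, sq_abs, sq_abs]
    ring
  rw [div_mul_eq_mul_div, div_le_iff₀' hαβ]
  nlinarith [sq_nonneg ‖α • x + β • y‖]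

lemma strongConvexOn_univ_mul_sq_norm (m : ℝ) :
    StrongConvexOn univ m fun x : E => m / 2 * ‖x‖ ^ 2 :=
  strongConvexOn_iff_convex.2 (by simpa using convexOn_const (0 : ℝ) convex_univ)

lemma StrongConvexOn.bddBelow_range [FiniteDimensional ℝ E] {μ : ℝ} {f : E → ℝ}
    (hf : StrongConvexOn univ μ f) (hμ : 0 < μ) : BddBelow (range f) := by
  obtain ⟨c, M, hcM⟩ := (strongConvexOn_iff_convex.1 hf).exists_sub_mul_norm_le
  refine ⟨c - M ^ 2 / (2 * μ), ?_⟩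
  rintro _ ⟨u, rfl⟩
  have hsq : 0 ≤ (μ * ‖u‖ - M) ^ 2 / (2 * μ) := by positivity
  have hexpand : (μ * ‖u‖ - M) ^ 2 / (2 * μ) = μ / 2 * ‖u‖ ^ 2 - M * ‖u‖ + M ^ 2 / (2 * μ) := by
    field_simp
    ring
  linarith [hcM u]

lemma StrongConvexOn.moreau_objective_le {μ η : ℝ} {f : E → ℝ} (hf : StrongConvexOn univ μ f)
    (hη : 0 < η) (hημ : 0 < η * μ + 1) (u v x y : E) {a b : ℝ} (ha : 0 ≤ a) (hb : 0 ≤ b)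
    (hab : a + b = 1) :
    f (a • u + b • v) + ‖a • u + b • v - (a • x + b • y)‖ ^ 2 / (2 * η) ≤
      a * (f u + ‖u - x‖ ^ 2 / (2 * η)) + b * (f v + ‖v - y‖ ^ 2 / (2 * η)) -
        a * b * (μ / (η * μ + 1) / 2 * ‖x - y‖ ^ 2) := by
  have hsq (p : E) : ‖p‖ ^ 2 / (2 * η) = η⁻¹ / 2 * ‖p‖ ^ 2 := by field_simp
  have hf_uv := hf.2 (mem_univ u) (mem_univ v) ha hb hab
  have hquad := (strongConvexOn_univ_mul_sq_norm (E := E) η⁻¹).2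
    (mem_univ (u - x)) (mem_univ (v - y)) ha hb hab
  have hcomb : a • (u - x) + b • (v - y) = a • u + b • v - (a • x + b • y) := by module
  have hdiff : u - v - (u - x - (v - y)) = x - y := by abel
  have hloss := mul_div_add_mul_norm_sub_sq_le (α := μ / 2) (β := η⁻¹ / 2)
    (by field_simp; linarith) (u - v) (u - x - (v - y))
  have hmod : μ / 2 * (η⁻¹ / 2) / (μ / 2 + η⁻¹ / 2) = μ / (η * μ + 1) / 2 := by
    field_simp
  rw [hdiff, hmod] at hloss
  simp only [smul_eq_mul, hcomb] at hf_uv hquad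
  simp only [hsq]
  linarith [mul_le_mul_of_nonneg_left hloss (mul_nonneg ha hb)]

end InnerProductSpace

theorem moreau_envelope_strongConvex_general {n : ℕ} (μ η : ℝ) (hμ : 0 < μ) (hη : 0 < η)
    (f : EuclideanSpace ℝ (Fin n) → ℝ)
    (hf : StrongConvexOn Set.univ μ f) :
    StrongConvexOn Set.univ (μ / (η * μ + 1))
      (fun x => ⨅ u : EuclideanSpace ℝ (Fin n), (f u + ‖u - x‖ ^ 2 / (2 * η))) := by
  obtain ⟨B, hB⟩ := hf.bddBelow_range hμ
  have hbdd (x : EuclideanSpace ℝ (Fin n)) :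
      BddBelow (range fun u => f u + ‖u - x‖ ^ 2 / (2 * η)) := by
    refine ⟨B, ?_⟩
    rintro _ ⟨u, rfl⟩
    have : 0 ≤ ‖u - x‖ ^ 2 / (2 * η) := by positivity
    linarith [hB (mem_range_self u)]
  exact uniformConvexOn_univ_iInf hbdd fun u v x y a b ha hb hab =>
    hf.moreau_objective_le hη (by positivity) u v x y ha hb hab

theorem moreau_envelope_strongConvex {n : ℕ} (μ η : ℝ) (hμ : 0 < μ) (hη : 0 < η)
    (f : EuclideanSpace ℝ (Fin n) → ℝ)
    (hf : StrongConvexOn Set.univ μ f) (hlsc : LowerSemicontinuous f) :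
    StrongConvexOn Set.univ (μ / (η * μ + 1))
      (fun x => ⨅ u : EuclideanSpace ℝ (Fin n), (f u + ‖u - x‖ ^ 2 / (2 * η))) :=
  moreau_envelope_strongConvex_general μ η hμ hη f hf
end

section
/- Let f, g: R^n → R be μ-strongly convex (with μ ≥ 0, μ + 1/η > 0), η > 0, and let x* = prox_{η,f}(x) = argmin_u { f(u) + ‖u-x‖²/(2η) } and y* = prox_{η,g}(x). Then (μ + 1/η)‖x* - y*‖² ≤ (f(y*) - g(y*)) + (g(x*) - f(x*)). In other words, the squared distance between the proximal points of two strongly convex functions at the same base point is bounded by the sum of the cross function-value gaps. -/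
/-!
Each prox objective `u ↦ h u + ‖u - x‖² / (2η)` is `(μ + 1/η)`-strongly convex, and a strongly
convex function exceeds its minimum value at `y` by at least `(m/2) ‖y - x_min‖²`. Writing this
for `f` at `ystar` and for `g` at `xstar` and adding, the quadratic terms cancel.
-/

open Filter Set Topology

lemma le_of_forall_pos_lt_one_mul_le {c d : ℝ} (h : ∀ a : ℝ, 0 < a → a < 1 → a * c ≤ d) :
    c ≤ d := by
  have hlim : Tendsto (fun a : ℝ => a * c) (𝓝[<] 1) (𝓝 c) := by
    simpa using ((continuous_mul_const c).tendsto 1).mono_left nhdsWithin_le_nhds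
  refine le_of_tendsto hlim ?_
  filter_upwards [Ioo_mem_nhdsLT zero_lt_one] with a ha using h a ha.1 ha.2

section

variable {E : Type*} [NormedAddCommGroup E]

section NormedSpace

variable [NormedSpace ℝ E] {s : Set E} {φ : ℝ → ℝ} {f g : E → ℝ} {m n : ℝ} {x y : E}

/- Minimality at `x` against the point `a • x + (1 - a) • y` gives `a * φ ‖x - y‖ ≤ f y - f x`
after dividing by `1 - a`; then let `a → 1`. -/
lemma UniformConvexOn.le_sub_of_isMinOn (hf : UniformConvexOn s φ f) (hmin : IsMinOn f s x)
    (hx : x ∈ s) (hy : y ∈ s) : φ ‖x - y‖ ≤ f y - f x := by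
  refine le_of_forall_pos_lt_one_mul_le fun a ha₀ ha₁ => ?_
  have hb : 0 < 1 - a := sub_pos.2 ha₁
  have hconv := hf.2 hx hy ha₀.le hb.le (add_sub_cancel a 1)
  have hle : f x ≤ f (a • x + (1 - a) • y) := hmin (hf.1 hx hy ha₀.le hb.le (add_sub_cancel a 1))
  rw [smul_eq_mul, smul_eq_mul] at hconv
  have hscaled : (1 - a) * (a * φ ‖x - y‖) ≤ (1 - a) * (f y - f x) := by nlinarith
  exact le_of_mul_le_mul_left hscaled hb

lemma StrongConvexOn.add (hf : StrongConvexOn s m f) (hg : StrongConvexOn s n g) :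
    StrongConvexOn s (m + n) (f + g) := by
  unfold StrongConvexOn at *
  convert hf.add hg using 1
  funext r
  simp only [Pi.add_apply]
  ring

end NormedSpace

variable [InnerProductSpace ℝ E]

lemma strongConvexOn_univ_norm_sub_sq_div (η : ℝ) (x : E) :
    StrongConvexOn univ (1 / η) fun u => ‖u - x‖ ^ 2 / (2 * η) := by
  rw [strongConvexOn_iff_convex]
  have haffine : (fun u => ‖u - x‖ ^ 2 / (2 * η) - 1 / η / 2 * ‖u‖ ^ 2) =
      fun u => (-η⁻¹ • innerSL ℝ x) u + ‖x‖ ^ 2 / (2 * η) := by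
    funext u
    simp only [norm_sub_sq_real, real_inner_comm, one_div, neg_smul,
      neg_apply, smul_apply, coe_innerSL_apply,
      smul_eq_mul]
    ring
  rw [haffine]
  exact ((-η⁻¹ • innerSL ℝ x).toLinearMap.convexOn convex_univ).add_const _

end

theorem prox_distance_bound_general {n : ℕ} (μ η : ℝ)
    (f g : EuclideanSpace ℝ (Fin n) → ℝ)
    (hf : StrongConvexOn Set.univ μ f) (hg : StrongConvexOn Set.univ μ g)
    (x xstar ystar : EuclideanSpace ℝ (Fin n))
    (hx : IsMinOn (fun u => f u + ‖u - x‖ ^ 2 / (2 * η)) Set.univ xstar)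
    (hy : IsMinOn (fun u => g u + ‖u - x‖ ^ 2 / (2 * η)) Set.univ ystar) :
    (μ + 1 / η) * ‖xstar - ystar‖ ^ 2 ≤ (f ystar - g ystar) + (g xstar - f xstar) := by
  have hquad := strongConvexOn_univ_norm_sub_sq_div η x
  have hfgap := (hf.add hquad).le_sub_of_isMinOn hx (mem_univ xstar) (mem_univ ystar)
  have hggap := (hg.add hquad).le_sub_of_isMinOn hy (mem_univ ystar) (mem_univ xstar)
  rw [norm_sub_rev] at hggap
  simp only [Pi.add_apply] at hfgap hggap
  linarith

theorem prox_distance_bound {n : ℕ} (μ η : ℝ) (hμ : 0 ≤ μ) (hη : 0 < η)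
    (hμη : 0 < μ + 1 / η) (f g : EuclideanSpace ℝ (Fin n) → ℝ)
    (hf : StrongConvexOn Set.univ μ f) (hg : StrongConvexOn Set.univ μ g)
    (hflsc : LowerSemicontinuous f) (hglsc : LowerSemicontinuous g)
    (x xstar ystar : EuclideanSpace ℝ (Fin n))
    (hx : IsMinOn (fun u => f u + ‖u - x‖ ^ 2 / (2 * η)) Set.univ xstar)
    (hy : IsMinOn (fun u => g u + ‖u - x‖ ^ 2 / (2 * η)) Set.univ ystar) :
    (μ + 1 / η) * ‖xstar - ystar‖ ^ 2 ≤ (f ystar - g ystar) + (g xstar - f xstar) :=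
  prox_distance_bound_general μ η f g hf hg x xstar ystar hx hy
end

section
/- Let b ∈ (0, 1/2], c > 1, γ_k = k^{-b}, η_k = c k^{-b}, and let λ_k be a positive sequence with λ_{k-1}²/λ_k² = 1 - 1/λ_k ≤ (k-1)/k. Define α_k = 1 - λ_{k-1}² γ_{k-1}/(λ_k² γ_k). Then η_k - (1 - α_k) η_{k-1} ≥ 0 for all k ≥ 2. -/
theorem eta_recursion_nonneg (b c : ℝ) (hb : 0 < b) (hb' : b ≤ 1 / 2) (hc : 1 < c)
    (lam : ℕ → ℝ) (hpos : ∀ k, 0 < lam k)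
    (hlam : ∀ k : ℕ, 2 ≤ k →
      (lam (k - 1)) ^ 2 / (lam k) ^ 2 = 1 - 1 / lam k ∧
      1 - 1 / lam k ≤ ((k : ℝ) - 1) / (k : ℝ)) :
    ∀ k : ℕ, 2 ≤ k →
      0 ≤ c * (k : ℝ) ^ (-b) -
        (1 - (1 - (lam (k - 1)) ^ 2 * ((k : ℝ) - 1) ^ (-b) / ((lam k) ^ 2 * (k : ℝ) ^ (-b)))) *
          (c * ((k : ℝ) - 1) ^ (-b)) := by
  intro k hk
  obtain ⟨h1, h2⟩ := hlam k hk
  set x : ℝ := (k : ℝ) with hxdef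
  have hx : (2 : ℝ) ≤ x := by rw [hxdef]; exact_mod_cast hk
  have hx0 : 0 < x := by linarith
  have hx1 : 0 < x - 1 := by linarith
  have hB : 0 < (lam k) ^ 2 := pow_pos (hpos k) 2
  have hA : 0 ≤ (lam (k - 1)) ^ 2 := sq_nonneg _
  have hxb : 0 < x ^ (-b) := Real.rpow_pos_of_pos hx0 _
  have hx1b : 0 < (x - 1) ^ (-b) := Real.rpow_pos_of_pos hx1 _
  have ht0 : 0 < (x - 1) / x := div_pos hx1 hx0
  have ht1 : (x - 1) / x ≤ 1 := by
    rw [div_le_one hx0]; linarith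
  -- key exponent inequality
  have key : (lam (k - 1)) ^ 2 / (lam k) ^ 2 ≤ ((x - 1) / x) ^ (2 * b) := by
    have h3 : ((x - 1) / x) ^ (1 : ℝ) ≤ ((x - 1) / x) ^ (2 * b) :=
      Real.rpow_le_rpow_of_exponent_ge ht0 ht1 (by linarith)
    rw [Real.rpow_one] at h3
    rw [h1]; linarith
  have hdiv : ((x - 1) / x) ^ (2 * b) = (x - 1) ^ (2 * b) / x ^ (2 * b) :=
    Real.div_rpow (le_of_lt hx1) (le_of_lt hx0) (2 * b)
  rw [hdiv] at key
  have hx2b : 0 < x ^ (2 * b) := Real.rpow_pos_of_pos hx0 _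
  have hx12b : 0 < (x - 1) ^ (2 * b) := Real.rpow_pos_of_pos hx1 _
  have key2 : (lam (k - 1)) ^ 2 * x ^ (2 * b) ≤ (lam k) ^ 2 * (x - 1) ^ (2 * b) := by
    rw [div_le_div_iff₀ hB hx2b] at key
    linarith
  -- relate negative exponents
  have hmul1 : (x - 1) ^ (-b) * (x - 1) ^ (-b) = ((x - 1) ^ (2 * b))⁻¹ := by
    rw [← Real.rpow_add hx1, ← Real.rpow_neg (le_of_lt hx1)]
    ring_nf
  have hmul2 : x ^ (-b) * x ^ (-b) = (x ^ (2 * b))⁻¹ := by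
    rw [← Real.rpow_add hx0, ← Real.rpow_neg (le_of_lt hx0)]
    ring_nf
  have main : (lam (k - 1)) ^ 2 * (x - 1) ^ (-b) / ((lam k) ^ 2 * x ^ (-b)) *
      (c * (x - 1) ^ (-b)) ≤ c * x ^ (-b) := by
    rw [div_mul_eq_mul_div, div_le_iff₀ (by positivity)]
    have expand : (lam (k - 1)) ^ 2 * (x - 1) ^ (-b) * (c * (x - 1) ^ (-b))
        = c * ((lam (k - 1)) ^ 2 * ((x - 1) ^ (2 * b))⁻¹) := by
      rw [← hmul1]; ring
    have expand2 : c * x ^ (-b) * ((lam k) ^ 2 * x ^ (-b))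
        = c * ((lam k) ^ 2 * (x ^ (2 * b))⁻¹) := by
      rw [← hmul2]; ring
    rw [expand, expand2]
    have : (lam (k - 1)) ^ 2 * ((x - 1) ^ (2 * b))⁻¹ ≤ (lam k) ^ 2 * (x ^ (2 * b))⁻¹ := by
      rw [← div_eq_mul_inv, ← div_eq_mul_inv, div_le_div_iff₀ hx12b hx2b]
      nlinarith [key2]
    nlinarith [this, hc]
  have hrw : (1 - (1 - (lam (k - 1)) ^ 2 * (x - 1) ^ (-b) / ((lam k) ^ 2 * x ^ (-b))))
      = (lam (k - 1)) ^ 2 * (x - 1) ^ (-b) / ((lam k) ^ 2 * x ^ (-b)) := by ring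
  rw [hrw]
  linarith [main]
end
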